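/- Assume non(𝒩) = 𝔠. With the notation of the previous construction (f_β = χ_{V ∪ {x_γ : γ ≤ β}} on [0,1], where {x_β : β<𝔠} enumerates [0,½] and V is a null set disjoint from [0,½]), the 𝔠-sequence (f_β)_{β<𝔠} of measurable functions satisfies: each f_β ≥ 0 a.e., the pointwise limit inferior function liminf_β f_β = χ_{V∪[0,½]} is integrable, and ∫_{[0,1]} liminf_β f_β dλ = ½ > 0 = liminf_β ∫_{[0,1]} f_β dλ; that is, Fatou's Lemma fails for this 𝔠-sequence. -/

import Mathlib

/-!
Under `non(𝒩) = 𝔠`, every proper initial segment `{x_γ : γ ≤ β}` of the enumeration has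
cardinality `< 𝔠` (since `𝔠.ord` is a limit ordinal), hence is null; so each `f_β` vanishes
almost everywhere and has integral `0`. On the other hand every point of `[0,½]` is some `x_α`
and so lies in the support of `f_β` for all `β ≥ α`: the `f_β` converge pointwise to
`χ_{V ∪ [0,½]}`, which agrees a.e. with `χ_{[0,½]}` and has integral `½`.
-/

open MeasureTheory Cardinal Ordinal

/-- `non(𝒩)`: the least cardinality of a non-null subset of `[0,1]`. -/
noncomputable def nonNull : Cardinal :=
  sInf {c : Cardinal | ∃ S : Set ℝ, S ⊆ Set.Icc 0 1 ∧ volume S ≠ 0 ∧ #S = c}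

open Set

universe u v

theorem Cardinal.lift_mk_image_Iic_lt_of_lt_ord {α : Type v} (f : Ordinal.{u} → α)
    {c : Cardinal.{u}} (hc : ℵ₀ ≤ c) {β : Ordinal.{u}} (hβ : β < c.ord) :
    lift.{u} #(f '' Iic β) < lift.{v} c := by
  have hsucc : (Order.succ β).card < c := lt_ord.mp ((isSuccLimit_ord hc).succ_lt hβ)
  rw [← lift_lt.{max u v, u + 1}, lift_lift, lift_lift]
  calc lift.{max u (u + 1)} #(f '' Iic β) ≤ lift.{v} #(Iic β) := by
        simpa using mk_image_le_lift (f := f) (s := Iic β)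
    _ = lift.{max (u + 1) v} (Order.succ β).card := by
        rw [← Order.Iio_succ, mk_Iio_ordinal, lift_lift]
    _ < lift.{max (u + 1) v} c := lift_lt.mpr hsucc

theorem Cardinal.mk_image_Iic_lt_continuum (f : Ordinal.{u} → ℝ) {β : Ordinal.{u}}
    (hβ : β < Cardinal.continuum.ord) : #(f '' Iic β) < 𝔠 := by
  rw [← lift_lt.{0, u}, lift_continuum]
  simpa using lift_mk_image_Iic_lt_of_lt_ord f aleph0_le_continuum hβ

theorem volume_eq_zero_of_mk_lt_nonNull {S : Set ℝ} (hS : S ⊆ Icc 0 1) (h : #S < nonNull) :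
    volume S = 0 := by
  by_contra hS0
  exact (show nonNull ≤ #S from csInf_le' ⟨S, hS, hS0, rfl⟩).not_gt h

theorem indicator_union_image_Iic_eventually_eq {α M : Type*} [Zero M] {o : Ordinal}
    (ho : 0 < o) (x : Ordinal → α) {A : Set α} (hmem : ∀ γ < o, x γ ∈ A)
    (hsurj : ∀ y ∈ A, ∃ γ < o, x γ = y) (V : Set α) (f : α → M) (t : α) :
    ∃ β₀ < o, ∀ β, β₀ ≤ β → β < o →
      (V ∪ x '' Iic β).indicator f t = (V ∪ A).indicator f t := by
  by_cases ht : t ∈ A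
  · obtain ⟨γ, hγ, rfl⟩ := hsurj _ ht
    refine ⟨γ, hγ, fun β hγβ _ => ?_⟩
    rw [indicator_of_mem (mem_union_right V (⟨γ, hγβ, rfl⟩ : x γ ∈ x '' Iic β)),
      indicator_of_mem (mem_union_right V ht)]
  · refine ⟨0, ho, fun β _ hβ => ?_⟩
    have himage : x '' Iic β ⊆ A :=
      image_subset_iff.2 fun γ hγ => hmem γ (lt_of_le_of_lt hγ hβ)
    have hiff : t ∈ V ∪ x '' Iic β ↔ t ∈ V ∪ A :=
      ⟨fun h => union_subset_union_right V himage h, fun h => h.imp_right (absurd · ht)⟩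
    classical
    rw [indicator_apply, indicator_apply, if_congr hiff rfl rfl]

theorem setIntegral_Icc_zero_one_indicator_Icc_zero_half :
    ∫ t in Icc (0 : ℝ) 1, (Icc (0 : ℝ) (1 / 2)).indicator (fun _ => (1 : ℝ)) t = 1 / 2 := by
  refine (integral_indicator_one measurableSet_Icc).trans ?_
  rw [measureReal_restrict_apply measurableSet_Icc, Icc_inter_Icc, Real.volume_real_Icc]
  norm_num

theorem stmt_10_general (hnon : nonNull = Cardinal.continuum)
    (x : Ordinal → ℝ)
    (hmem : ∀ α < Cardinal.continuum.ord, x α ∈ Set.Icc (0:ℝ) (1/2))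
    (hsurj : ∀ y ∈ Set.Icc (0:ℝ) (1/2), ∃ α < Cardinal.continuum.ord, x α = y)
    (V : Set ℝ) (hV0 : volume V = 0) :
    (∀ β < Cardinal.continuum.ord,
      AEMeasurable
        (Set.indicator (V ∪ x '' {γ | γ ≤ β}) (fun _ => (1:ℝ)))
        (volume : Measure ℝ)) ∧
    (∀ β < Cardinal.continuum.ord,
      ∀ᵐ t ∂(volume : Measure ℝ),
        0 ≤ Set.indicator (V ∪ x '' {γ | γ ≤ β}) (fun _ => (1:ℝ)) t) ∧
    (∀ t ∈ Set.Icc (0:ℝ) 1, ∀ ε > (0:ℝ), ∃ β₀ < Cardinal.continuum.ord,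
      ∀ β, β₀ < β → β < Cardinal.continuum.ord →
        |Set.indicator (V ∪ x '' {γ | γ ≤ β}) (fun _ => (1:ℝ)) t -
          Set.indicator (V ∪ Set.Icc (0:ℝ) (1/2)) (fun _ => (1:ℝ)) t| < ε) ∧
    IntegrableOn (Set.indicator (V ∪ Set.Icc (0:ℝ) (1/2)) (fun _ => (1:ℝ)))
      (Set.Icc (0:ℝ) 1) volume ∧
    (∫ t in Set.Icc (0:ℝ) 1,
        Set.indicator (V ∪ Set.Icc (0:ℝ) (1/2)) (fun _ => (1:ℝ)) t = 1/2) ∧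
    (∀ β < Cardinal.continuum.ord,
      ∫ t in Set.Icc (0:ℝ) 1,
        Set.indicator (V ∪ x '' {γ | γ ≤ β}) (fun _ => (1:ℝ)) t = 0) ∧
    (0:ℝ) < 1/2 := by
  simp only [Iic_def]
  have hnull : ∀ β < Cardinal.continuum.ord, volume (V ∪ x '' Iic β) = 0 := fun β hβ =>
    measure_union_null hV0 <| volume_eq_zero_of_mk_lt_nonNull
      (image_subset_iff.2 fun γ hγ =>
        Icc_subset_Icc_right (by norm_num) (hmem γ (lt_of_le_of_lt hγ hβ)))
      (hnon.symm ▸ mk_image_Iic_lt_continuum x hβ)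
  have hf_ae_zero : ∀ β < Cardinal.continuum.ord,
      (V ∪ x '' Iic β).indicator (fun _ => (1 : ℝ)) =ᵐ[volume] fun _ => 0 := fun β hβ => by
    simpa using
      indicator_ae_eq_of_ae_eq_set (f := fun _ => (1 : ℝ)) (ae_eq_empty.2 (hnull β hβ))
  have hlim_ae : (V ∪ Icc (0 : ℝ) (1 / 2)).indicator (fun _ => (1 : ℝ))
      =ᵐ[volume.restrict (Icc 0 1)] (Icc (0 : ℝ) (1 / 2)).indicator fun _ => 1 :=
    ae_restrict_of_ae <| indicator_ae_eq_of_ae_eq_set <|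
      union_ae_eq_right_of_ae_eq_empty (ae_eq_empty.2 hV0)
  refine ⟨fun β hβ => aemeasurable_zero.congr (hf_ae_zero β hβ).symm,
    fun β _ => ae_of_all _ (indicator_nonneg fun _ _ => zero_le_one), ?_, ?_,
    (integral_congr_ae hlim_ae).trans setIntegral_Icc_zero_one_indicator_Icc_zero_half,
    fun β hβ =>
      (integral_congr_ae (ae_restrict_of_ae (hf_ae_zero β hβ))).trans (integral_zero _ _),
    by norm_num⟩
  · intro t _ ε hε
    obtain ⟨β₀, hβ₀, heq⟩ := indicator_union_image_Iic_eventually_eq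
      (lt_ord.2 (by simpa using continuum_pos)) x hmem hsurj V (fun _ => (1 : ℝ)) t
    exact ⟨β₀, hβ₀, fun β hβ₀β hβ => by simpa [heq β hβ₀β.le hβ] using hε⟩
  · exact ((integrableOn_const (by simp [Real.volume_Icc])).indicator measurableSet_Icc).congr
      hlim_ae.symm

/-- Assuming `non(𝒩) = 𝔠`: with `f_β = χ_{V ∪ {x_γ : γ ≤ β}}` on `[0,1]`, where
`{x_β : β < 𝔠}` enumerates `[0,½]` and `V` is a null set disjoint from `[0,½]`, the
`𝔠`-sequence `(f_β)` of nonnegative measurable functions converges pointwise everywhere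
to its liminf `χ_{V ∪ [0,½]}`, which is integrable with integral `½ > 0`, while every
integral `∫ f_β dλ` equals `0`; i.e. Fatou's Lemma fails for this `𝔠`-sequence. -/
theorem stmt_10 (hnon : nonNull = Cardinal.continuum)
    (x : Ordinal → ℝ)
    (hmem : ∀ α < Cardinal.continuum.ord, x α ∈ Set.Icc (0:ℝ) (1/2))
    (hinj : ∀ α β, α < Cardinal.continuum.ord → β < Cardinal.continuum.ord →
      x α = x β → α = β)
    (hsurj : ∀ y ∈ Set.Icc (0:ℝ) (1/2), ∃ α < Cardinal.continuum.ord, x α = y)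
    (V : Set ℝ) (hVdisj : Disjoint V (Set.Icc (0:ℝ) (1/2))) (hV0 : volume V = 0) :
    (∀ β < Cardinal.continuum.ord,
      AEMeasurable
        (Set.indicator (V ∪ x '' {γ | γ ≤ β}) (fun _ => (1:ℝ)))
        (volume : Measure ℝ)) ∧
    (∀ β < Cardinal.continuum.ord,
      ∀ᵐ t ∂(volume : Measure ℝ),
        0 ≤ Set.indicator (V ∪ x '' {γ | γ ≤ β}) (fun _ => (1:ℝ)) t) ∧
    (∀ t ∈ Set.Icc (0:ℝ) 1, ∀ ε > (0:ℝ), ∃ β₀ < Cardinal.continuum.ord,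
      ∀ β, β₀ < β → β < Cardinal.continuum.ord →
        |Set.indicator (V ∪ x '' {γ | γ ≤ β}) (fun _ => (1:ℝ)) t -
          Set.indicator (V ∪ Set.Icc (0:ℝ) (1/2)) (fun _ => (1:ℝ)) t| < ε) ∧
    IntegrableOn (Set.indicator (V ∪ Set.Icc (0:ℝ) (1/2)) (fun _ => (1:ℝ)))
      (Set.Icc (0:ℝ) 1) volume ∧
    (∫ t in Set.Icc (0:ℝ) 1,
        Set.indicator (V ∪ Set.Icc (0:ℝ) (1/2)) (fun _ => (1:ℝ)) t = 1/2) ∧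
    (∀ β < Cardinal.continuum.ord,
      ∫ t in Set.Icc (0:ℝ) 1,
        Set.indicator (V ∪ x '' {γ | γ ≤ β}) (fun _ => (1:ℝ)) t = 0) ∧
    (0:ℝ) < 1/2 :=
  stmt_10_general hnon x hmem hsurj V hV0
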